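/- (Deterministic U-process increment bound.) Fix n ≥ 2, ε ∈ (0,1], Tmax > 0, a measurable space E and a function S : [0,∞) × E → [0,1]. Let x_1, …, x_{2n} be points of E × [0, Tmax) × [0,∞), write x_r = (z_r, t_r, d_r) and X_r = min(t_r, d_r). For a function g : [0, Tmax) → [ε, 1] define h^g(x_r, x_s) = 1{t_r < d_r}·1{S(t_r; z_r) < S(t_r; z_s)}·1{t_r < X_s}·g(t_r)^{-2}, its symmetrisation h̄^g(x_r, x_s) = (h^g(x_r, x_s) + h^g(x_s, x_r))/2, and the operator 𝕋_n(f) = Σ_{1≤i≠j≤n} [ f(x_{2i}, x_{2j}) + f(x_{2i}, x_{2j−1}) + f(x_{2i−1}, x_{2j}) + f(x_{2i−1}, x_{2j−1}) ]. Then for any two functions g, g' : [0, Tmax) → [ε, 1], 𝕋_n(|h̄^g − h̄^{g'}|) ≤ 2(n − 1) Σ_{r=1}^{2n} | g(t_r)^{-2} − g'(t_r)^{-2} |. -/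

import Mathlib

open scoped Classical

/-- The kernel `h^g(x, y) = 1{t_x < d_x}·1{S(t_x;z_x) < S(t_x;z_y)}·1{t_x < X_y}·g(t_x)⁻²`,
where `x = (z_x, t_x, d_x)` and `X_y = min(t_y, d_y)`. -/
noncomputable def hker {E : Type*} (S : ℝ → E → ℝ) (g : ℝ → ℝ)
    (x y : E × ℝ × ℝ) : ℝ :=
  (if x.2.1 < x.2.2 ∧ S x.2.1 x.1 < S x.2.1 y.1 ∧ x.2.1 < min y.2.1 y.2.2
    then (1 : ℝ) else 0) * ((g x.2.1) ^ 2)⁻¹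

/-- The symmetrisation `h̄^g(x, y) = (h^g(x, y) + h^g(y, x))/2`. -/
noncomputable def hbar {E : Type*} (S : ℝ → E → ℝ) (g : ℝ → ℝ)
    (x y : E × ℝ × ℝ) : ℝ :=
  (hker S g x y + hker S g y x) / 2

/-- The operator `𝕋ₙ(f) = Σ_{1≤i≠j≤n} [f(x_{2i}, x_{2j}) + f(x_{2i}, x_{2j−1})
+ f(x_{2i−1}, x_{2j}) + f(x_{2i−1}, x_{2j−1})]` (points indexed `1, …, 2n`). -/
noncomputable def Tn {E : Type*} (n : ℕ) (x : ℕ → E × ℝ × ℝ)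
    (f : (E × ℝ × ℝ) → (E × ℝ × ℝ) → ℝ) : ℝ :=
  ∑ i ∈ Finset.Icc 1 n, ∑ j ∈ Finset.Icc 1 n,
    if i ≠ j then
      f (x (2 * i)) (x (2 * j)) + f (x (2 * i)) (x (2 * j - 1)) +
        f (x (2 * i - 1)) (x (2 * j)) + f (x (2 * i - 1)) (x (2 * j - 1))
    else 0

/-!
Replacing `g` by `g'` only changes the weight `g(t)⁻²` of the kernel, so
`|h̄^g − h̄^{g'}|(x_r, x_s) ≤ (D_r + D_s)/2` with `D_r = |g(t_r)⁻² − g'(t_r)⁻²|`.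
Grouping the points into the pairs `{x_{2i−1}, x_{2i}}`, the four terms of `𝕋ₙ` at `(i, j)` are
then bounded by `A_i + A_j` with `A_i = D_{2i−1} + D_{2i}`, and each `A_i` occurs in exactly
`2(n − 1)` of the off-diagonal pairs `i ≠ j`.
-/

open Finset

theorem Finset.sum_sum_ite_ne_add {ι R : Type*} [CommRing R] [DecidableEq ι]
    (s : Finset ι) (a : ι → R) :
    ∑ i ∈ s, ∑ j ∈ s, (if i ≠ j then a i + a j else 0) = 2 * (#s - 1) * ∑ i ∈ s, a i := by
  have row : ∀ i ∈ s, ∑ j ∈ s, (if i ≠ j then a i + a j else 0)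
      = ∑ j ∈ s, (a i + a j) - (a i + a i) := by
    intro i hi
    have diag := sum_ite_eq s i (fun j => a i + a j)
    rw [if_pos hi] at diag
    rw [← diag, ← sum_sub_distrib]
    refine sum_congr rfl fun j _ => ?_
    by_cases h : i = j <;> simp [h]
  rw [sum_congr rfl row, sum_sub_distrib]
  simp only [sum_add_distrib, sum_const, nsmul_eq_mul, ← mul_sum]
  ring

theorem Finset.sum_Icc_one_two_mul {M : Type*} [AddCommMonoid M] (f : ℕ → M) (n : ℕ) :
    ∑ r ∈ Icc 1 (2 * n), f r = ∑ i ∈ Icc 1 n, (f (2 * i) + f (2 * i - 1)) := by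
  induction n with
  | zero => simp
  | succ m ih =>
    rw [show 2 * (m + 1) = 2 * m + 1 + 1 by ring, sum_Icc_succ_top (by omega),
      sum_Icc_succ_top (by omega), ih, sum_Icc_succ_top (by omega : 1 ≤ m + 1),
      show 2 * (m + 1) - 1 = 2 * m + 1 by omega, show 2 * (m + 1) = 2 * m + 1 + 1 by ring,
      add_assoc, add_comm (f _)]

theorem Tn_le_of_le_add_div_two {E : Type*} (n : ℕ) (x : ℕ → E × ℝ × ℝ)
    (f : (E × ℝ × ℝ) → (E × ℝ × ℝ) → ℝ) (w : E × ℝ × ℝ → ℝ)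
    (hf : ∀ a b, f a b ≤ (w a + w b) / 2) :
    Tn n x f ≤ 2 * (n - 1 : ℝ) * ∑ r ∈ Icc 1 (2 * n), w (x r) := by
  set A : ℕ → ℝ := fun i => w (x (2 * i)) + w (x (2 * i - 1))
  calc Tn n x f ≤ ∑ i ∈ Icc 1 n, ∑ j ∈ Icc 1 n, if i ≠ j then A i + A j else 0 := by
        refine sum_le_sum fun i _ => sum_le_sum fun j _ => ?_
        split_ifs
        · linarith [hf (x (2 * i)) (x (2 * j)), hf (x (2 * i)) (x (2 * j - 1)),
            hf (x (2 * i - 1)) (x (2 * j)), hf (x (2 * i - 1)) (x (2 * j - 1))]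
        · exact le_rfl
    _ = 2 * (n - 1 : ℝ) * ∑ r ∈ Icc 1 (2 * n), w (x r) := by
        rw [sum_sum_ite_ne_add, Nat.card_Icc, Nat.add_sub_cancel,
          sum_Icc_one_two_mul]

theorem abs_hker_sub_le {E : Type*} (S : ℝ → E → ℝ) (g g' : ℝ → ℝ) (x y : E × ℝ × ℝ) :
    |hker S g x y - hker S g' x y| ≤ |(g x.2.1 ^ 2)⁻¹ - (g' x.2.1 ^ 2)⁻¹| := by
  unfold hker
  split_ifs <;> simp

theorem abs_hbar_sub_le {E : Type*} (S : ℝ → E → ℝ) (g g' : ℝ → ℝ) (x y : E × ℝ × ℝ) :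
    |hbar S g x y - hbar S g' x y| ≤
      (|(g x.2.1 ^ 2)⁻¹ - (g' x.2.1 ^ 2)⁻¹| + |(g y.2.1 ^ 2)⁻¹ - (g' y.2.1 ^ 2)⁻¹|) / 2 := by
  calc |hbar S g x y - hbar S g' x y|
      = |(hker S g x y - hker S g' x y) + (hker S g y x - hker S g' y x)| / 2 := by
        rw [hbar, hbar, ← abs_two, ← abs_div, abs_two]
        ring_nf
    _ ≤ _ := by
        gcongr
        exact (abs_add_le _ _).trans (add_le_add (abs_hker_sub_le S g g' x y)
          (abs_hker_sub_le S g g' y x))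

theorem stmt_9_general {E : Type*} (S : ℝ → E → ℝ)
    (n : ℕ)
    (x : ℕ → E × ℝ × ℝ)
    (g g' : ℝ → ℝ) :
    Tn n x (fun a b => |hbar S g a b - hbar S g' a b|) ≤
      2 * (n - 1 : ℝ) *
        ∑ r ∈ Finset.Icc 1 (2 * n), |((g (x r).2.1) ^ 2)⁻¹ - ((g' (x r).2.1) ^ 2)⁻¹| :=
  Tn_le_of_le_add_div_two n x _ (fun a => |(g a.2.1 ^ 2)⁻¹ - (g' a.2.1 ^ 2)⁻¹|)
    (abs_hbar_sub_le S g g')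

/-- **Deterministic U-process increment bound.** For points `x₁, …, x_{2n}` of
`E × [0, Tmax) × [0,∞)` and any two functions `g, g' : [0, Tmax) → [ε, 1]`,
`𝕋ₙ(|h̄^g − h̄^{g'}|) ≤ 2(n−1) Σ_{r=1}^{2n} |g(t_r)⁻² − g'(t_r)⁻²|`. -/
theorem stmt_9 {E : Type*} (S : ℝ → E → ℝ) (hS01 : ∀ t z, S t z ∈ Set.Icc (0 : ℝ) 1)
    (n : ℕ) (hn : 2 ≤ n) (ε : ℝ) (hε : ε ∈ Set.Ioc (0 : ℝ) 1)
    (Tmax : ℝ) (hTmax : 0 < Tmax)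
    (x : ℕ → E × ℝ × ℝ)
    (hx : ∀ r, 1 ≤ r → r ≤ 2 * n → (x r).2.1 ∈ Set.Ico (0 : ℝ) Tmax ∧ 0 ≤ (x r).2.2)
    (g g' : ℝ → ℝ)
    (hg : ∀ t ∈ Set.Ico (0 : ℝ) Tmax, g t ∈ Set.Icc ε 1)
    (hg' : ∀ t ∈ Set.Ico (0 : ℝ) Tmax, g' t ∈ Set.Icc ε 1) :
    Tn n x (fun a b => |hbar S g a b - hbar S g' a b|) ≤
      2 * (n - 1 : ℝ) *
        ∑ r ∈ Finset.Icc 1 (2 * n), |((g (x r).2.1) ^ 2)⁻¹ - ((g' (x r).2.1) ^ 2)⁻¹| :=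
  stmt_9_general S n x g g'
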